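/- arXiv:1904.01808 — 3 statements merged into one kernel-verified Lean document; each statement's English description precedes it below -/
import Mathlib

section
/- Fix n ≥ 1 and let J : ℝⁿ × ℝⁿ → ℝⁿ × ℝⁿ be the standard linear complex structure J(x,y) = (−y, x). Let H, F : ℝⁿ × ℝⁿ → ℝ be smooth, let α ≥ 0, and let v : ℝ → ℝⁿ × ℝⁿ be a smooth 1-periodic loop which is spacelike, i.e. 1 + α·(d/dt)(F(v(t))) > 0 for all t, so that τ_v(t) = t + αF(v(t)) is a strictly increasing bijection of ℝ with smooth inverse σ_v. Define the action A_α(v) = (1/2)∫₀¹ ⟨J v(t), v'(t)⟩ dt − ∫₀¹ H(v(t + αF(v(t)))) dt. Then v is a critical point of A_α, meaning (d/ds)|_{s=0} A_α(v + sη) = 0 for every smooth 1-periodic η : ℝ → ℝⁿ × ℝⁿ, if and only if v solves the delay equation v'(t) = σ_v'(t)·J∇H(v(t)) + α·⟨∇H(v(τ_v(t))), v'(τ_v(t))⟩·J∇F(v(t)) for all t. -/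
open scoped RealInnerProductSpace
open MeasureTheory intervalIntegral Set Metric

/-- The phase space `ℝⁿ × ℝⁿ` with its standard (L²) inner product. -/
noncomputable abbrev Phase (n : ℕ) : Type :=
  WithLp 2 (EuclideanSpace ℝ (Fin n) × EuclideanSpace ℝ (Fin n))

/-- The standard linear complex structure `J(x,y) = (-y, x)`. -/
noncomputable def Jstd (n : ℕ) (p : Phase n) : Phase n := WithLp.toLp 2 (-p.ofLp.2, p.ofLp.1)

/-- The retarded Hamiltonian action functional
`A_α(w) = (1/2)∫₀¹ ⟨J w(t), w'(t)⟩ dt − ∫₀¹ H(w(t + αF(w(t)))) dt`. -/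
noncomputable def actionA (n : ℕ) (α : ℝ) (H F : Phase n → ℝ) (w : ℝ → Phase n) : ℝ :=
  (1 / 2) * (∫ t in (0:ℝ)..1, (inner ℝ (Jstd n (w t)) (deriv w t) : ℝ)) -
    ∫ t in (0:ℝ)..1, H (w (t + α * F (w t)))

set_option synthInstance.maxHeartbeats 400000 in
instance instCSPhase (n : ℕ) : ContinuousSMul ℝ (Phase n) := by infer_instance

namespace Stmt2Aux

noncomputable def Jclm (n : ℕ) : Phase n →L[ℝ] Phase n :=
  (WithLp.prodContinuousLinearEquiv 2 ℝ _ _).symm.toContinuousLinearMap ∘L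
    (((-(ContinuousLinearMap.snd ℝ _ _)).prod (ContinuousLinearMap.fst ℝ _ _)) ∘L
      (WithLp.prodContinuousLinearEquiv 2 ℝ (EuclideanSpace ℝ (Fin n))
        (EuclideanSpace ℝ (Fin n))).toContinuousLinearMap)

lemma Jclm_apply (n : ℕ) (p : Phase n) : Jclm n p = Jstd n p := rfl

lemma J_skew (n : ℕ) (p q : Phase n) : ⟪Jstd n p, q⟫ = - ⟪p, Jstd n q⟫ := by
  simp only [Jstd, WithLp.prod_inner_apply, inner_neg_left, inner_neg_right]
  ring

lemma JJ (n : ℕ) (p : Phase n) : Jstd n (Jstd n p) = -p := by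
  show (WithLp.toLp 2 (-p.ofLp.1, -p.ofLp.2) : Phase n) = -p
  rfl

lemma J_add (n : ℕ) (p q : Phase n) : Jstd n (p + q) = Jstd n p + Jstd n q := by
  rw [← Jclm_apply, ← Jclm_apply, ← Jclm_apply, map_add]

lemma J_smul (n : ℕ) (r : ℝ) (p : Phase n) : Jstd n (r • p) = r • Jstd n p := by
  rw [← Jclm_apply, ← Jclm_apply, (Jclm n).map_smul]

lemma J_cont (n : ℕ) : Continuous (Jstd n) := by
  have : Jstd n = fun p => Jclm n p := by funext p; rw [Jclm_apply]
  rw [this]; exact (Jclm n).continuous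

lemma J_contDiff (n : ℕ) : ContDiff ℝ (⊤ : ℕ∞) (Jstd n) := by
  have : Jstd n = fun p => Jclm n p := by funext p; rw [Jclm_apply]
  rw [this]; exact (Jclm n).contDiff

lemma inner_gradient' {E : Type*} [NormedAddCommGroup E] [InnerProductSpace ℝ E]
    [CompleteSpace E] (f : E → ℝ) (x y : E) :
    ⟪gradient f x, y⟫ = fderiv ℝ f x y := by
  rw [gradient]; exact InnerProductSpace.toDual_symm_apply

lemma contDiff_gradient {E : Type*} [NormedAddCommGroup E] [InnerProductSpace ℝ E]
    [CompleteSpace E] (f : E → ℝ) (hf : ContDiff ℝ (⊤ : ℕ∞) f) :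
    ContDiff ℝ (⊤ : ℕ∞) (gradient f) := by
  have h1 : ContDiff ℝ (⊤ : ℕ∞) (fderiv ℝ f) := hf.fderiv_right (le_of_eq (by rfl))
  have h2 : ContDiff ℝ (⊤ : ℕ∞) (fun L : E →L[ℝ] ℝ => (InnerProductSpace.toDual ℝ E).symm L) :=
    (InnerProductSpace.toDual ℝ E).symm.contDiff
  exact h2.comp h1

lemma contDiff_deriv {E : Type*} [NormedAddCommGroup E] [NormedSpace ℝ E]
    (f : ℝ → E) (hf : ContDiff ℝ (⊤ : ℕ∞) f) : ContDiff ℝ (⊤ : ℕ∞) (deriv f) := by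
  have : ContDiff ℝ (((⊤ : ℕ∞) : WithTop ℕ∞) + 1) f := by rw [show (((⊤ : ℕ∞) : WithTop ℕ∞) + 1) = ((⊤ : ℕ∞) : WithTop ℕ∞) from rfl]; exact hf
  exact (contDiff_succ_iff_deriv.mp this).2.2

lemma deriv_periodic {E : Type*} [NormedAddCommGroup E] [NormedSpace ℝ E]
    (f : ℝ → E) (hper : ∀ t, f (t + 1) = f t) (t : ℝ) : deriv f (t + 1) = deriv f t := by
  have : (fun x => f (x + 1)) = f := funext hper
  rw [← deriv_comp_add_const (f := f) (a := 1) (x := t), this]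

lemma deriv_shift_periodic (σ : ℝ → ℝ) (hadd : ∀ u, σ (u + 1) = σ u + 1) (u : ℝ) :
    deriv σ (u + 1) = deriv σ u := by
  have h1 : (fun x => σ (x + 1)) = fun x => σ x + 1 := funext hadd
  rw [← deriv_comp_add_const (f := σ) (a := 1) (x := u), h1, deriv_add_const]

lemma zero_of_integral_zero (h : ℝ → ℝ) (hc : Continuous h) (hnn : ∀ t, 0 ≤ h t)
    (hper : ∀ t, h (t + 1) = h t) (hint : ∫ t in (0:ℝ)..1, h t = 0) : ∀ t, h t = 0 := by
  intro t₀
  by_contra hne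
  have hper' : Function.Periodic h 1 := hper
  have h0 : 0 < h t₀ := lt_of_le_of_ne (hnn t₀) (Ne.symm hne)
  have hfr : h (Int.fract t₀) = h t₀ := by
    have := hper'.sub_int_mul_eq (x := t₀) (n := ⌊t₀⌋)
    simpa [Int.fract, sub_eq_add_neg] using this
  obtain ⟨t₂, ht₂pos, ht₂le, ht₂h⟩ : ∃ t₂, 0 < t₂ ∧ t₂ ≤ 1 ∧ 0 < h t₂ := by
    rcases eq_or_lt_of_le (Int.fract_nonneg t₀) with heq | hlt
    · refine ⟨1, one_pos, le_refl 1, ?_⟩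
      rw [show (1:ℝ) = 0 + 1 by ring, hper 0]
      have : h 0 = h t₀ := by rw [← hfr, ← heq]
      rw [this]; exact h0
    · exact ⟨Int.fract t₀, hlt, (Int.fract_lt_one t₀).le, by rw [hfr]; exact h0⟩
  have hfi : IntervalIntegrable h volume 0 1 := hc.intervalIntegrable 0 1
  have hpos : 0 < ∫ t in (0:ℝ)..1, h t := by
    rw [intervalIntegral.integral_pos_iff_support_of_nonneg_ae
      (Filter.Eventually.of_forall hnn) hfi]
    refine ⟨one_pos, ?_⟩
    have hopen : IsOpen {x | 0 < h x} := isOpen_lt continuous_const hc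
    obtain ⟨ε, hε, hball⟩ := Metric.isOpen_iff.mp hopen t₂ ht₂h
    set a : ℝ := max (t₂ - ε) 0 with ha
    have hat₂ : a < t₂ := max_lt (by linarith) ht₂pos
    have hsub : Ioo a t₂ ⊆ Function.support h ∩ Ioc 0 1 := by
      intro x hx
      have hxball : x ∈ Metric.ball t₂ ε := by
        rw [Metric.mem_ball, Real.dist_eq, abs_lt]
        have h1 := hx.1; have h2 := hx.2
        have h3 : t₂ - ε ≤ a := le_max_left _ _
        constructor <;> linarith
      refine ⟨?_, lt_of_le_of_lt (le_max_right _ _) hx.1, le_trans hx.2.le ht₂le⟩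
      exact ne_of_gt (hball hxball)
    calc (0:ENNReal) < volume (Ioo a t₂) := by
          rw [Real.volume_Ioo]; exact ENNReal.ofReal_pos.mpr (by linarith)
      _ ≤ volume (Function.support h ∩ Ioc 0 1) := measure_mono hsub
  rw [hint] at hpos; exact lt_irrefl 0 hpos

section Phi
variable {n : ℕ} (H F : Phase n → ℝ) (α : ℝ) (v η : ℝ → Phase n)

/-- derivative in `s` of the delayed term -/
lemma hasDerivAt_Phi (hH : ContDiff ℝ (⊤ : ℕ∞) H) (hF : ContDiff ℝ (⊤ : ℕ∞) F)
    (hv : ContDiff ℝ (⊤ : ℕ∞) v) (hη : ContDiff ℝ (⊤ : ℕ∞) η) (s t : ℝ) :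
    HasDerivAt (fun s' => H (v (t + α * F (v t + s' • η t)) + s' • η (t + α * F (v t + s' • η t))))
      (⟪gradient H (v (t + α * F (v t + s • η t)) + s • η (t + α * F (v t + s • η t))),
        (α * ⟪gradient F (v t + s • η t), η t⟫) • deriv v (t + α * F (v t + s • η t)) +
          (s • ((α * ⟪gradient F (v t + s • η t), η t⟫) • deriv η (t + α * F (v t + s • η t))) +
            η (t + α * F (v t + s • η t)))⟫) s := by
  have hvd : Differentiable ℝ v := hv.differentiable (by simp)
  have hηd : Differentiable ℝ η := hη.differentiable (by simp)
  set u : Phase n := v t + s • η t with hu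
  have h1 : HasDerivAt (fun s' : ℝ => v t + s' • η t) (η t) s := by
    simpa using ((hasDerivAt_id s).smul_const (η t)).const_add (v t)
  have h2 : HasDerivAt (fun s' : ℝ => F (v t + s' • η t)) (⟪gradient F u, η t⟫) s := by
    rw [inner_gradient']
    exact (hF.differentiable (by simp) u).hasFDerivAt.comp_hasDerivAt s h1
  set θs : ℝ := t + α * F (v t + s • η t) with hθs
  have h3 : HasDerivAt (fun s' : ℝ => t + α * F (v t + s' • η t))
      (α * ⟪gradient F u, η t⟫) s := by
    simpa using (h2.const_mul α).const_add t
  have h4 : HasDerivAt (fun s' : ℝ => v (t + α * F (v t + s' • η t)))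
      ((α * ⟪gradient F u, η t⟫) • deriv v θs) s :=
    HasDerivAt.scomp s (hvd θs).hasDerivAt h3
  have h5 : HasDerivAt (fun s' : ℝ => η (t + α * F (v t + s' • η t)))
      ((α * ⟪gradient F u, η t⟫) • deriv η θs) s :=
    HasDerivAt.scomp s (hηd θs).hasDerivAt h3
  have h6 : HasDerivAt (fun s' : ℝ => s' • η (t + α * F (v t + s' • η t)))
      (s • ((α * ⟪gradient F u, η t⟫) • deriv η θs) + η θs) s := by
    have h := (hasDerivAt_id' s).smul h5
    simp only [one_smul] at h
    exact h
  have h7 : HasDerivAt (fun s' : ℝ => v (t + α * F (v t + s' • η t)) +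
      s' • η (t + α * F (v t + s' • η t)))
      ((α * ⟪gradient F u, η t⟫) • deriv v θs +
        (s • ((α * ⟪gradient F u, η t⟫) • deriv η θs) + η θs)) s := h4.add h6
  have h8 := (hH.differentiable (by simp) _).hasFDerivAt.comp_hasDerivAt s h7
  rw [← inner_gradient'] at h8
  exact h8

end Phi

/-- The key variational derivative formula. -/
lemma keyDeriv (n : ℕ) (H F : Phase n → ℝ) (hH : ContDiff ℝ (⊤ : ℕ∞) H) (hF : ContDiff ℝ (⊤ : ℕ∞) F)
    (α : ℝ) (v : ℝ → Phase n) (hv : ContDiff ℝ (⊤ : ℕ∞) v) (hvper : ∀ t : ℝ, v (t + 1) = v t)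
    (σ : ℝ → ℝ) (hσ : ContDiff ℝ (⊤ : ℕ∞) σ)
    (hσleft : ∀ t : ℝ, σ (t + α * F (v t)) = t)
    (hσright : ∀ t : ℝ, σ t + α * F (v (σ t)) = t)
    (η : ℝ → Phase n) (hη : ContDiff ℝ (⊤ : ℕ∞) η) (hηper : ∀ t : ℝ, η (t + 1) = η t) :
    HasDerivAt (fun s : ℝ => actionA n α H F (fun t => v t + s • η t))
      (-∫ t in (0:ℝ)..1, ⟪Jstd n (deriv v t) + deriv σ t • gradient H (v t) +
          (α * ⟪gradient H (v (t + α * F (v t))), deriv v (t + α * F (v t))⟫) • gradient F (v t),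
        η t⟫) 0 := by
  have hvd : Differentiable ℝ v := hv.differentiable (by simp)
  have hηd : Differentiable ℝ η := hη.differentiable (by simp)
  have hσd : Differentiable ℝ σ := hσ.differentiable (by simp)
  have hvc : Continuous v := hv.continuous
  have hηc : Continuous η := hη.continuous
  have hv' : Continuous (deriv v) := hv.continuous_deriv (by simp)
  have hη' : Continuous (deriv η) := hη.continuous_deriv (by simp)
  have hσ' : Continuous (deriv σ) := hσ.continuous_deriv (by simp)
  have hFc : Continuous F := hF.continuous
  have hHc : Continuous H := hH.continuous
  have hgH : Continuous (gradient H) := (contDiff_gradient H hH).continuous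
  have hgF : Continuous (gradient F) := (contDiff_gradient F hF).continuous
  have hJc : Continuous (Jstd n) := J_cont n
  have hτc : Continuous (fun t : ℝ => t + α * F (v t)) :=
    continuous_id.add (continuous_const.mul (hFc.comp hvc))
  have hτadd : ∀ t : ℝ, (t + 1) + α * F (v (t + 1)) = (t + α * F (v t)) + 1 := by
    intro t; rw [hvper t]; ring
  have hσadd : ∀ u : ℝ, σ (u + 1) = σ u + 1 := by
    intro u
    have h1 : (σ u + 1) + α * F (v (σ u + 1)) = u + 1 := by
      rw [hτadd (σ u), hσright u]
    calc σ (u + 1) = σ ((σ u + 1) + α * F (v (σ u + 1))) := by rw [h1]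
      _ = σ u + 1 := hσleft _
  have hσ'per : ∀ u : ℝ, deriv σ (u + 1) = deriv σ u := deriv_shift_periodic σ hσadd
  have hv'per : ∀ t : ℝ, deriv v (t + 1) = deriv v t := deriv_periodic v hvper
  -- quadratic expansion of the symplectic-area term
  set I1 : ℝ := ∫ t in (0:ℝ)..1, (⟪Jstd n (v t), deriv v t⟫ : ℝ) with hI1def
  set q2 : ℝ → ℝ := fun t => ⟪Jstd n (η t), deriv v t⟫ + ⟪Jstd n (v t), deriv η t⟫ with hq2def
  set q3 : ℝ → ℝ := fun t => ⟪Jstd n (η t), deriv η t⟫ with hq3def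
  have hq1c : Continuous (fun t : ℝ => (⟪Jstd n (v t), deriv v t⟫ : ℝ)) :=
    (hJc.comp hvc).inner hv'
  have hq2c : Continuous q2 :=
    ((hJc.comp hηc).inner hv').add ((hJc.comp hvc).inner hη')
  have hq3c : Continuous q3 := (hJc.comp hηc).inner hη'
  have hiJvη : IntervalIntegrable (fun t : ℝ => (⟪Jstd n (deriv v t), η t⟫ : ℝ)) volume 0 1 :=
    ((hJc.comp hv').inner hηc).intervalIntegrable 0 1
  have hA1 : ∀ s : ℝ,
      (∫ t in (0:ℝ)..1, (inner ℝ (Jstd n (v t + s • η t)) (deriv (fun u => v u + s • η u) t) : ℝ))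
        = I1 + s * (∫ t in (0:ℝ)..1, q2 t) + s ^ 2 * (∫ t in (0:ℝ)..1, q3 t) := by
    intro s
    have hde : ∀ t, deriv (fun u => v u + s • η u) t = deriv v t + s • deriv η t := by
      intro t
      exact ((hvd t).hasDerivAt.add ((hηd t).hasDerivAt.const_smul s)).deriv
    have hpt : ∀ t, (inner ℝ (Jstd n (v t + s • η t)) (deriv (fun u => v u + s • η u) t) : ℝ)
        = (⟪Jstd n (v t), deriv v t⟫ : ℝ) + s * q2 t + s ^ 2 * q3 t := by
      intro t
      rw [hde t, J_add, J_smul]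
      simp only [inner_add_left, inner_add_right, real_inner_smul_left, real_inner_smul_right,
        hq2def, hq3def]
      ring
    rw [intervalIntegral.integral_congr (g := fun t =>
        (⟪Jstd n (v t), deriv v t⟫ : ℝ) + s * q2 t + s ^ 2 * q3 t) (fun t _ => hpt t)]
    rw [intervalIntegral.integral_add
        (f := fun t => (⟪Jstd n (v t), deriv v t⟫ : ℝ) + s * q2 t) (g := fun t => s ^ 2 * q3 t)
        ((hq1c.add (continuous_const.mul hq2c)).intervalIntegrable 0 1)
        ((continuous_const.mul hq3c).intervalIntegrable 0 1),
      intervalIntegral.integral_add (f := fun t => (⟪Jstd n (v t), deriv v t⟫ : ℝ))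
        (g := fun t => s * q2 t) (hq1c.intervalIntegrable 0 1)
        ((continuous_const.mul hq2c).intervalIntegrable 0 1),
      intervalIntegral.integral_const_mul, intervalIntegral.integral_const_mul]
  -- integration by parts over a full period
  have hparts : ∫ t in (0:ℝ)..1, q2 t
      = -2 * ∫ t in (0:ℝ)..1, (⟪Jstd n (deriv v t), η t⟫ : ℝ) := by
    have hprim : ∀ t : ℝ, HasDerivAt (fun u => (⟪Jstd n (v u), η u⟫ : ℝ))
        ((⟪Jstd n (v t), deriv η t⟫ : ℝ) + ⟪Jstd n (deriv v t), η t⟫) t := by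
      intro t
      have hJv : HasDerivAt (fun u => Jstd n (v u)) (Jstd n (deriv v t)) t := by
        have h0 : HasDerivAt (fun u => Jclm n (v u)) (Jclm n (deriv v t)) t :=
          (Jclm n).hasFDerivAt.comp_hasDerivAt t (hvd t).hasDerivAt
        simpa only [Jclm_apply] using h0
      exact HasDerivAt.inner ℝ hJv (hηd t).hasDerivAt
    have hcont : Continuous (fun t : ℝ =>
        (⟪Jstd n (v t), deriv η t⟫ : ℝ) + ⟪Jstd n (deriv v t), η t⟫) :=
      ((hJc.comp hvc).inner hη').add ((hJc.comp hv').inner hηc)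
    have hzero : ∫ t in (0:ℝ)..1,
        ((⟪Jstd n (v t), deriv η t⟫ : ℝ) + ⟪Jstd n (deriv v t), η t⟫) = 0 := by
      rw [intervalIntegral.integral_eq_sub_of_hasDerivAt (fun t _ => hprim t)
        (hcont.intervalIntegrable 0 1)]
      have hv1 : v 1 = v 0 := by simpa using hvper 0
      have hη1 : η 1 = η 0 := by simpa using hηper 0
      rw [hv1, hη1]; ring
    have hskew : ∀ t, (⟪Jstd n (η t), deriv v t⟫ : ℝ) = -⟪Jstd n (deriv v t), η t⟫ := by
      intro t
      rw [J_skew n (η t) (deriv v t), real_inner_comm (η t)]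
    have hq2eq : ∀ t, q2 t = ((⟪Jstd n (v t), deriv η t⟫ : ℝ) + ⟪Jstd n (deriv v t), η t⟫)
        - 2 * ⟪Jstd n (deriv v t), η t⟫ := by
      intro t
      simp only [hq2def]
      rw [hskew t]; ring
    rw [intervalIntegral.integral_congr (fun t _ => hq2eq t),
      intervalIntegral.integral_sub (hcont.intervalIntegrable 0 1) (hiJvη.const_mul 2),
      hzero, intervalIntegral.integral_const_mul]
    ring
  -- the delayed term : differentiation under the integral sign
  set Φ' : ℝ → ℝ → ℝ := fun s t =>
    ⟪gradient H (v (t + α * F (v t + s • η t)) + s • η (t + α * F (v t + s • η t))),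
      (α * ⟪gradient F (v t + s • η t), η t⟫) • deriv v (t + α * F (v t + s • η t)) +
        (s • ((α * ⟪gradient F (v t + s • η t), η t⟫) • deriv η (t + α * F (v t + s • η t))) +
          η (t + α * F (v t + s • η t)))⟫ with hΦ'def
  have hcu : Continuous (fun p : ℝ × ℝ => v p.2 + p.1 • η p.2) :=
    (hvc.comp continuous_snd).add (continuous_fst.smul (hηc.comp continuous_snd))
  have hcθ : Continuous (fun p : ℝ × ℝ => p.2 + α * F (v p.2 + p.1 • η p.2)) :=
    continuous_snd.add (continuous_const.mul (hFc.comp hcu))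
  have hcW : Continuous (fun p : ℝ × ℝ =>
      v (p.2 + α * F (v p.2 + p.1 • η p.2)) + p.1 • η (p.2 + α * F (v p.2 + p.1 • η p.2))) :=
    (hvc.comp hcθ).add (continuous_fst.smul (hηc.comp hcθ))
  have hsc : Continuous (fun p : ℝ × ℝ => α * ⟪gradient F (v p.2 + p.1 • η p.2), η p.2⟫) :=
    continuous_const.mul ((hgF.comp hcu).inner (hηc.comp continuous_snd))
  have hcΦ' : Continuous (fun p : ℝ × ℝ => Φ' p.1 p.2) := by
    apply Continuous.inner (hgH.comp hcW)
    exact (hsc.smul (hv'.comp hcθ)).add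
      ((continuous_fst.smul (hsc.smul (hη'.comp hcθ))).add (hηc.comp hcθ))
  have hΦcont : ∀ s : ℝ, Continuous (fun t =>
      H (v (t + α * F (v t + s • η t)) + s • η (t + α * F (v t + s • η t)))) := by
    intro s
    exact hHc.comp (hcW.comp (Continuous.prodMk_right s))
  obtain ⟨C, hC⟩ := (((isCompact_Icc : IsCompact (Icc (-1:ℝ) 1)).prod
    (isCompact_Icc : IsCompact (Icc (-1:ℝ) 2)))).exists_bound_of_continuousOn hcΦ'.continuousOn
  have hmain := intervalIntegral.hasDerivAt_integral_of_dominated_loc_of_deriv_le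
    (𝕜 := ℝ) (μ := volume) (a := 0) (b := 1)
    (F := fun s t => H (v (t + α * F (v t + s • η t)) + s • η (t + α * F (v t + s • η t))))
    (F' := Φ') (x₀ := (0:ℝ)) (bound := fun _ => C) (ball_mem_nhds (0:ℝ) one_pos)
    (Filter.Eventually.of_forall (fun s => (hΦcont s).aestronglyMeasurable))
    ((hΦcont 0).intervalIntegrable 0 1)
    (hcΦ'.comp (Continuous.prodMk_right 0)).aestronglyMeasurable
    (Filter.Eventually.of_forall (fun t ht x hx => by
      have ht' : t ∈ Ioc (0:ℝ) 1 := by rwa [Set.uIoc_of_le zero_le_one] at ht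
      have hx' : x ∈ Icc (-1:ℝ) 1 := by
        have := mem_ball_zero_iff.mp hx
        rw [Real.norm_eq_abs, abs_lt] at this
        exact ⟨this.1.le, this.2.le⟩
      exact hC (x, t) ⟨hx', by constructor <;> [linarith [ht'.1]; linarith [ht'.2]]⟩))
    intervalIntegrable_const
    (Filter.Eventually.of_forall (fun t _ x _ =>
      hasDerivAt_Phi H F α v η hH hF hv hη x t))
  have hA2 : HasDerivAt (fun s : ℝ => ∫ t in (0:ℝ)..1,
      H (v (t + α * F (v t + s • η t)) + s • η (t + α * F (v t + s • η t))))
      (∫ t in (0:ℝ)..1, Φ' 0 t) 0 := hmain.2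
  -- compute the value of the delayed derivative at `s = 0`
  set cc : ℝ → ℝ :=
    fun t => α * ⟪gradient H (v (t + α * F (v t))), deriv v (t + α * F (v t))⟫ with hccdef
  set g : ℝ → ℝ := fun u => ⟪gradient H (v u), η u⟫ with hgdef
  have hccc : Continuous cc :=
    continuous_const.mul ((hgH.comp (hvc.comp hτc)).inner (hv'.comp hτc))
  have hgc : Continuous g := (hgH.comp hvc).inner hηc
  have hiσg : IntervalIntegrable (fun t : ℝ => deriv σ t * g t) volume 0 1 :=
    (hσ'.mul hgc).intervalIntegrable 0 1
  have hgFηc : Continuous (fun t : ℝ => (⟪gradient F (v t), η t⟫ : ℝ)) := (hgF.comp hvc).inner hηc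
  have hgper : ∀ u : ℝ, g (u + 1) = g u := by
    intro u; simp only [hgdef]; rw [hvper u, hηper u]
  have hicc : IntervalIntegrable (fun t : ℝ => cc t * (⟪gradient F (v t), η t⟫ : ℝ)) volume 0 1 :=
    (hccc.mul hgFηc).intervalIntegrable 0 1
  have higτ : IntervalIntegrable (fun t : ℝ => g (t + α * F (v t))) volume 0 1 :=
    (hgc.comp hτc).intervalIntegrable 0 1
  have hΦ'0 : ∀ t, Φ' 0 t = cc t * ⟪gradient F (v t), η t⟫ + g (t + α * F (v t)) := by
    intro t
    simp only [hΦ'def, zero_smul, add_zero, zero_add, smul_zero, hccdef, hgdef]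
    rw [inner_add_right, real_inner_smul_right]
    ring
  have hsplit0 : ∫ t in (0:ℝ)..1, Φ' 0 t
      = (∫ t in (0:ℝ)..1, cc t * ⟪gradient F (v t), η t⟫)
        + ∫ t in (0:ℝ)..1, g (t + α * F (v t)) := by
    rw [intervalIntegral.integral_congr (fun t _ => hΦ'0 t)]
    exact intervalIntegral.integral_add hicc higτ
  -- change of variables in the delayed integral
  have hcv : ∫ t in (0:ℝ)..1, g (t + α * F (v t)) = ∫ t in (0:ℝ)..1, deriv σ t * g t := by
    have hsub := intervalIntegral.integral_comp_smul_deriv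
      (f := σ) (f' := deriv σ) (g := fun u => g (u + α * F (v u)))
      (a := (0:ℝ) + α * F (v 0)) (b := (1:ℝ) + α * F (v 1))
      (fun x _ => (hσd x).hasDerivAt) hσ'.continuousOn (hgc.comp hτc)
    simp only [Function.comp] at hsub
    rw [hσleft 0, hσleft 1] at hsub
    rw [← hsub]
    have heq1 : ∀ x, deriv σ x • g (σ x + α * F (v (σ x))) = deriv σ x * g x := by
      intro x; rw [hσright x, smul_eq_mul]
    rw [intervalIntegral.integral_congr (g := fun x => deriv σ x * g x) (fun x _ => heq1 x)]
    have hperfn : Function.Periodic (fun x => deriv σ x * g x) 1 := by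
      intro x; simp only []; rw [hσ'per x, hgper x]
    have hτ1 : (1:ℝ) + α * F (v 1) = ((0:ℝ) + α * F (v 0)) + 1 := by
      have hv1 : v 1 = v 0 := by simpa using hvper 0
      rw [hv1]; ring
    rw [hτ1]
    simpa using hperfn.intervalIntegral_add_eq ((0:ℝ) + α * F (v 0)) 0
  -- put everything together
  have hfun : (fun s : ℝ => actionA n α H F (fun t => v t + s • η t)) =
      fun s : ℝ => (1/2) * (I1 + s * (∫ t in (0:ℝ)..1, q2 t)
          + s ^ 2 * (∫ t in (0:ℝ)..1, q3 t)) -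
        ∫ t in (0:ℝ)..1,
          H (v (t + α * F (v t + s • η t)) + s • η (t + α * F (v t + s • η t))) := by
    funext s
    simp only [actionA]
    rw [hA1 s]
  rw [hfun]
  have hpoly : HasDerivAt (fun s : ℝ => (1/2) * (I1 + s * (∫ t in (0:ℝ)..1, q2 t)
      + s ^ 2 * (∫ t in (0:ℝ)..1, q3 t))) ((1/2) * (∫ t in (0:ℝ)..1, q2 t)) 0 := by
    have ha : HasDerivAt (fun s : ℝ => s * (∫ t in (0:ℝ)..1, q2 t))
        (∫ t in (0:ℝ)..1, q2 t) 0 := by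
      simpa using (hasDerivAt_id (0:ℝ)).mul_const (∫ t in (0:ℝ)..1, q2 t)
    have hb : HasDerivAt (fun s : ℝ => s ^ 2 * (∫ t in (0:ℝ)..1, q3 t)) 0 0 := by
      simpa using (hasDerivAt_pow 2 (0:ℝ)).mul_const (∫ t in (0:ℝ)..1, q3 t)
    simpa using (((hasDerivAt_const (0:ℝ) I1).add ha).add hb).const_mul (1/2 : ℝ)
  have htotal := hpoly.sub hA2
  refine htotal.congr_deriv ?_
  symm
  rw [hparts, hsplit0, hcv]
  have hGpt : ∀ t, (⟪Jstd n (deriv v t) + deriv σ t • gradient H (v t)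
      + cc t • gradient F (v t), η t⟫ : ℝ)
      = (⟪Jstd n (deriv v t), η t⟫ : ℝ) + deriv σ t * g t
        + cc t * ⟪gradient F (v t), η t⟫ := by
    intro t
    rw [inner_add_left, inner_add_left, real_inner_smul_left, real_inner_smul_left]
  rw [intervalIntegral.integral_congr (fun t _ => hGpt t)]
  rw [intervalIntegral.integral_add (hiJvη.add hiσg) hicc,
    intervalIntegral.integral_add hiJvη hiσg]
  ring

end Stmt2Aux

open Stmt2Aux in
/-- Proposition `del1` of the paper on `(ℝ²ⁿ, ω₀)`:
a spacelike loop `v` is a critical point of the retarded action `A_α` if and only if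
it solves the delay equation
`v'(t) = σ_v'(t)·J∇H(v(t)) + α·⟨∇H(v(τ_v(t))), v'(τ_v(t))⟩·J∇F(v(t))`,
where `τ_v(t) = t + αF(v(t))` and `σ_v` is its inverse. -/
theorem statement2 (n : ℕ) (hn : 1 ≤ n) (H F : Phase n → ℝ)
    (hH : ContDiff ℝ (⊤ : ℕ∞) H) (hF : ContDiff ℝ (⊤ : ℕ∞) F) (α : ℝ) (hα : 0 ≤ α)
    (v : ℝ → Phase n) (hv : ContDiff ℝ (⊤ : ℕ∞) v) (hvper : ∀ t : ℝ, v (t + 1) = v t)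
    (hspace : ∀ t : ℝ, 0 < 1 + α * deriv (fun s => F (v s)) t)
    (σ : ℝ → ℝ) (hσ : ContDiff ℝ (⊤ : ℕ∞) σ)
    (hσleft : ∀ t : ℝ, σ (t + α * F (v t)) = t)
    (hσright : ∀ t : ℝ, σ t + α * F (v (σ t)) = t) :
    (∀ η : ℝ → Phase n, ContDiff ℝ (⊤ : ℕ∞) η → (∀ t : ℝ, η (t + 1) = η t) →
        HasDerivAt (fun s : ℝ => actionA n α H F (fun t => v t + s • η t)) 0 0) ↔
      (∀ t : ℝ, deriv v t =
        deriv σ t • Jstd n (gradient H (v t)) +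
          (α * (inner ℝ (gradient H (v (t + α * F (v t))))
              (deriv v (t + α * F (v t))) : ℝ)) • Jstd n (gradient F (v t))) := by
  have hτs : ContDiff ℝ (⊤ : ℕ∞) (fun t : ℝ => t + α * F (v t)) :=
    contDiff_id.add (contDiff_const.mul (hF.comp hv))
  set cc : ℝ → ℝ :=
    fun t => α * ⟪gradient H (v (t + α * F (v t))), deriv v (t + α * F (v t))⟫ with hccdef
  set G : ℝ → Phase n := fun t =>
    Jstd n (deriv v t) + deriv σ t • gradient H (v t) + cc t • gradient F (v t) with hGdef
  have key : ∀ η : ℝ → Phase n, ContDiff ℝ (⊤ : ℕ∞) η → (∀ t : ℝ, η (t + 1) = η t) →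
      HasDerivAt (fun s : ℝ => actionA n α H F (fun t => v t + s • η t))
        (-∫ t in (0:ℝ)..1, (⟪G t, η t⟫ : ℝ)) 0 :=
    fun η hηs hηp => keyDeriv n H F hH hF α v hv hvper σ hσ hσleft hσright η hηs hηp
  have hGsmooth : ContDiff ℝ (⊤ : ℕ∞) G := by
    refine ContDiff.add (ContDiff.add ?_ ?_) ?_
    · exact (J_contDiff n).comp (contDiff_deriv v hv)
    · exact (contDiff_deriv σ hσ).smul ((contDiff_gradient H hH).comp hv)
    · refine ContDiff.smul (𝕜' := ℝ) ?_ ((contDiff_gradient F hF).comp hv)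
      exact contDiff_const.mul
        (ContDiff.inner ℝ ((contDiff_gradient H hH).comp (hv.comp hτs))
          ((contDiff_deriv v hv).comp hτs))
  have hτadd : ∀ t : ℝ, (t + 1) + α * F (v (t + 1)) = (t + α * F (v t)) + 1 := by
    intro t; rw [hvper t]; ring
  have hσadd : ∀ u : ℝ, σ (u + 1) = σ u + 1 := by
    intro u
    have h1 : (σ u + 1) + α * F (v (σ u + 1)) = u + 1 := by
      rw [hτadd (σ u), hσright u]
    calc σ (u + 1) = σ ((σ u + 1) + α * F (v (σ u + 1))) := by rw [h1]
      _ = σ u + 1 := hσleft _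
  have hGper : ∀ t : ℝ, G (t + 1) = G t := by
    intro t
    have h1 : deriv v (t + 1) = deriv v t := deriv_periodic v hvper t
    have h2 : deriv σ (t + 1) = deriv σ t := deriv_shift_periodic σ hσadd t
    have h3 : cc (t + 1) = cc t := by
      simp only [hccdef]
      rw [hτadd t, hvper (t + α * F (v t)), deriv_periodic v hvper]
    simp only [hGdef]
    rw [h1, h2, h3, hvper t]
  have hiff : ∀ t : ℝ, (deriv v t = deriv σ t • Jstd n (gradient H (v t))
      + cc t • Jstd n (gradient F (v t))) ↔ G t = 0 := by
    intro t
    constructor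
    · intro h
      show Jstd n (deriv v t) + deriv σ t • gradient H (v t) + cc t • gradient F (v t) = 0
      rw [h, J_add, J_smul, J_smul, JJ, JJ]
      simp only [smul_neg]
      abel
    · intro h
      have h' : Jstd n (deriv v t) + deriv σ t • gradient H (v t)
          + cc t • gradient F (v t) = 0 := h
      have h2 := congrArg (fun z => Jstd n z) h'
      rw [J_add, J_add, J_smul, J_smul, JJ] at h2
      have hJ0 : Jstd n (0 : Phase n) = 0 := by rw [← Jclm_apply]; exact map_zero _
      rw [hJ0] at h2
      have h3 : (deriv σ t • Jstd n (gradient H (v t)) + cc t • Jstd n (gradient F (v t)))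
          - deriv v t = 0 := by rw [← h2]; abel
      exact (sub_eq_zero.mp h3).symm
  constructor
  · intro hcrit t
    have h1 := key G hGsmooth hGper
    have h2 := hcrit G hGsmooth hGper
    have h3 := h1.unique h2
    have h4 : (∫ u in (0:ℝ)..1, (⟪G u, G u⟫ : ℝ)) = 0 := neg_eq_zero.mp h3
    have h5 : ∀ u : ℝ, (⟪G u, G u⟫ : ℝ) = 0 :=
      zero_of_integral_zero _ (hGsmooth.continuous.inner hGsmooth.continuous)
        (fun u => real_inner_self_nonneg)
        (fun u => by rw [hGper u]) h4
    exact (hiff t).mpr (inner_self_eq_zero.mp (h5 t))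
  · intro heqn η hηs hηp
    have hG0 : ∀ u, G u = 0 := fun u => (hiff u).mp (heqn u)
    have h1 := key η hηs hηp
    have hzero : (-∫ t in (0:ℝ)..1, (⟪G t, η t⟫ : ℝ)) = 0 := by
      rw [intervalIntegral.integral_congr (g := fun _ : ℝ => (0:ℝ))
        (fun u _ => by rw [hG0 u, inner_zero_left])]
      simp
    rw [hzero] at h1
    exact h1
end

section
/- Let H, F : ℝᵐ → ℝ be smooth functions and let v, η : ℝ → ℝᵐ be smooth 1-periodic curves. Then the function s ↦ ∫₀¹ F(v(t) + s·η(t)) · ⟨∇H(v(t) + s·η(t)), v'(t) + s·η'(t)⟩ dt is differentiable at s = 0 with derivative ∫₀¹ ( ⟨∇F(v(t)), η(t)⟩·⟨∇H(v(t)), v'(t)⟩ − ⟨∇F(v(t)), v'(t)⟩·⟨∇H(v(t)), η(t)⟩ ) dt. -/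
open MeasureTheory intervalIntegral Metric

section aux

variable {m : ℕ}

local notation "E" => EuclideanSpace ℝ (Fin m)

lemma inner_gradient_eq (f : E → ℝ) (x w : E) :
    (inner ℝ (gradient f x) w : ℝ) = fderiv ℝ f x w := by
  rw [← InnerProductSpace.toDual_apply_apply, gradient, LinearIsometryEquiv.apply_symm_apply]

end aux

/-- the differential of the first-order functional
`H¹(v) = ∫₀¹ F(v(t))·(d/dt)H(v(t)) dt`: its first variation at a loop `v` in the
direction `η` is `∫₀¹ (dF ∧ dH)(η, ∂ₜv) dt`. -/
theorem statement9 (m : ℕ) (H F : EuclideanSpace ℝ (Fin m) → ℝ)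
    (hH : ContDiff ℝ (⊤ : ℕ∞) H) (hF : ContDiff ℝ (⊤ : ℕ∞) F)
    (v η : ℝ → EuclideanSpace ℝ (Fin m))
    (hv : ContDiff ℝ (⊤ : ℕ∞) v) (hη : ContDiff ℝ (⊤ : ℕ∞) η)
    (hvper : ∀ t : ℝ, v (t + 1) = v t) (hηper : ∀ t : ℝ, η (t + 1) = η t) :
    HasDerivAt
      (fun s : ℝ => ∫ t in (0:ℝ)..1,
        F (v t + s • η t) *
          (inner ℝ (gradient H (v t + s • η t)) (deriv v t + s • deriv η t) : ℝ))
      (∫ t in (0:ℝ)..1,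
        ((inner ℝ (gradient F (v t)) (η t) : ℝ) * (inner ℝ (gradient H (v t)) (deriv v t) : ℝ) -
          (inner ℝ (gradient F (v t)) (deriv v t) : ℝ) * (inner ℝ (gradient H (v t)) (η t) : ℝ)))
      0 := by
  simp only [inner_gradient_eq]
  set H' := fderiv ℝ H with hH'def
  set F' := fderiv ℝ F with hF'def
  set B := fderiv ℝ H' with hBdef
  have hHd : Differentiable ℝ H := hH.differentiable (by simp)
  have hFd : Differentiable ℝ F := hF.differentiable (by simp)
  have hvd : Differentiable ℝ v := hv.differentiable (by simp)
  have hηd : Differentiable ℝ η := hη.differentiable (by simp)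
  have hH'c : ContDiff ℝ (⊤ : ℕ∞) H' := hH.fderiv_right (by simp)
  have hH'd : Differentiable ℝ H' := hH'c.differentiable (by simp)
  have hBc : Continuous B := hH'c.continuous_fderiv (by simp)
  have hF'c : Continuous F' := hF.continuous_fderiv (by simp)
  have hv'c : Continuous (deriv v) := hv.continuous_deriv (by simp)
  have hη'c : Continuous (deriv η) := hη.continuous_deriv (by simp)
  -- the curves
  set γ := fun (s t : ℝ) => v t + s • η t with hγdef
  set δ := fun (s t : ℝ) => deriv v t + s • deriv η t with hδdef
  -- integrand and its s-derivative
  set f : ℝ → ℝ → ℝ := fun s t => F (γ s t) * H' (γ s t) (δ s t) with hfdef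
  set f' : ℝ → ℝ → ℝ := fun s t =>
    F' (γ s t) (η t) * H' (γ s t) (δ s t) +
      F (γ s t) * (B (γ s t) (η t) (δ s t) + H' (γ s t) (deriv η t)) with hf'def
  have hγc : Continuous (fun p : ℝ × ℝ => γ p.1 p.2) := by
    exact (hv.continuous.comp continuous_snd).add
      (continuous_fst.smul (hη.continuous.comp continuous_snd))
  have hδc : Continuous (fun p : ℝ × ℝ => δ p.1 p.2) := by
    exact (hv'c.comp continuous_snd).add (continuous_fst.smul (hη'c.comp continuous_snd))
  have hfc : Continuous (fun p : ℝ × ℝ => f p.1 p.2) := by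
    apply Continuous.mul (hFd.continuous.comp hγc)
    exact (hH'c.continuous.comp hγc).clm_apply hδc
  have hf'c : Continuous (fun p : ℝ × ℝ => f' p.1 p.2) := by
    apply Continuous.add
    · exact ((hF'c.comp hγc).clm_apply (hη.continuous.comp continuous_snd)).mul
        ((hH'c.continuous.comp hγc).clm_apply hδc)
    · apply Continuous.mul (hFd.continuous.comp hγc)
      apply Continuous.add
      · exact (((hBc.comp hγc).clm_apply (hη.continuous.comp continuous_snd)).clm_apply hδc)
      · exact (hH'c.continuous.comp hγc).clm_apply (hη'c.comp continuous_snd)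
  -- pointwise derivative in s
  have hderiv : ∀ (s t : ℝ), HasDerivAt (fun s => f s t) (f' s t) s := by
    intro s t
    have hγs : HasDerivAt (fun s => γ s t) (η t) s := by
      simpa [hγdef] using ((hasDerivAt_id s).smul_const (η t)).const_add (v t)
    have hδs : HasDerivAt (fun s => δ s t) (deriv η t) s := by
      simpa [hδdef] using ((hasDerivAt_id s).smul_const (deriv η t)).const_add (deriv v t)
    have h1 : HasDerivAt (fun s => F (γ s t)) (F' (γ s t) (η t)) s :=
      (hFd.differentiableAt.hasFDerivAt.comp_hasDerivAt s hγs)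
    have h2 : HasDerivAt (fun s => H' (γ s t)) (B (γ s t) (η t)) s :=
      (hH'd.differentiableAt.hasFDerivAt.comp_hasDerivAt s hγs)
    have h3 : HasDerivAt (fun s => H' (γ s t) (δ s t))
        (B (γ s t) (η t) (δ s t) + H' (γ s t) (deriv η t)) s := h2.clm_apply hδs
    simpa [hf'def, hfdef, mul_comm, Pi.mul_def] using h1.mul h3
  -- bound on the derivative on a compact set
  obtain ⟨C, hC⟩ : ∃ C, ∀ p ∈ (Set.Icc (-1:ℝ) 1) ×ˢ (Set.uIcc (0:ℝ) 1),
      ‖f' p.1 p.2‖ ≤ C :=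
    ((isCompact_Icc.prod isCompact_uIcc)).exists_bound_of_continuousOn hf'c.continuousOn
  -- differentiate under the integral sign
  have key := intervalIntegral.hasDerivAt_integral_of_dominated_loc_of_deriv_le
    (F := f) (F' := f') (x₀ := (0:ℝ)) (a := 0) (b := 1) (μ := volume)
    (bound := fun _ => C) (ball_mem_nhds (0:ℝ) one_pos)
    (Filter.Eventually.of_forall fun s =>
      ((hfc.comp (Continuous.prodMk_right s)).aestronglyMeasurable))
    ((hfc.comp (Continuous.prodMk_right 0)).intervalIntegrable 0 1)
    ((hf'c.comp (Continuous.prodMk_right 0)).aestronglyMeasurable)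
    (Filter.Eventually.of_forall fun t ht s hs => by
      refine hC (s, t) ⟨?_, Set.uIoc_subset_uIcc ht⟩
      have := mem_ball_iff_norm.mp hs
      simp only [sub_zero, Real.norm_eq_abs] at this
      exact ⟨neg_le_of_abs_le this.le, le_of_abs_le this.le⟩)
    (intervalIntegrable_const)
    (Filter.Eventually.of_forall fun t ht s hs => hderiv s t)
  -- now rewrite the value of the derivative
  have hkey := key.2
  -- ∫ f' 0 = target
  have hint : (∫ t in (0:ℝ)..1, f' 0 t) =
      ∫ t in (0:ℝ)..1,
        (F' (v t) (η t) * H' (v t) (deriv v t) - F' (v t) (deriv v t) * H' (v t) (η t)) := by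
    -- difference is the derivative of g t = F (v t) * H' (v t) (η t)
    set g : ℝ → ℝ := fun t => F (v t) * H' (v t) (η t) with hgdef
    set d : ℝ → ℝ := fun t =>
      F' (v t) (deriv v t) * H' (v t) (η t) +
        F (v t) * (B (v t) (η t) (deriv v t) + H' (v t) (deriv η t)) with hddef
    have hsymm : ∀ x a b : EuclideanSpace ℝ (Fin m), B x a b = B x b a := fun x a b =>
      second_derivative_symmetric (fun y => hHd.differentiableAt.hasFDerivAt)
        (hH'd.differentiableAt.hasFDerivAt) a b
    have hg : ∀ t, HasDerivAt g (d t) t := by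
      intro t
      have hvt : HasDerivAt v (deriv v t) t := hvd.differentiableAt.hasDerivAt
      have hηt : HasDerivAt η (deriv η t) t := hηd.differentiableAt.hasDerivAt
      have h1 : HasDerivAt (fun t => F (v t)) (F' (v t) (deriv v t)) t :=
        hFd.differentiableAt.hasFDerivAt.comp_hasDerivAt t hvt
      have h2 : HasDerivAt (fun t => H' (v t)) (B (v t) (deriv v t)) t :=
        hH'd.differentiableAt.hasFDerivAt.comp_hasDerivAt t hvt
      have h3 : HasDerivAt (fun t => H' (v t) (η t))
          (B (v t) (deriv v t) (η t) + H' (v t) (deriv η t)) t := h2.clm_apply hηt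
      have := h1.mul h3
      rw [hsymm (v t) (deriv v t) (η t)] at this
      simpa [hddef, hgdef, mul_comm, mul_add, Pi.mul_def] using this
    have hdc : Continuous d := by
      apply Continuous.add
      · exact ((hF'c.comp hv.continuous).clm_apply hv'c).mul
          ((hH'c.continuous.comp hv.continuous).clm_apply hη.continuous)
      · apply Continuous.mul (hFd.continuous.comp hv.continuous)
        exact ((((hBc.comp hv.continuous).clm_apply hη.continuous).clm_apply hv'c)).add
          ((hH'c.continuous.comp hv.continuous).clm_apply hη'c)
    have hdint : (∫ t in (0:ℝ)..1, d t) = 0 := by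
      rw [intervalIntegral.integral_eq_sub_of_hasDerivAt (fun t _ => hg t)
        (hdc.intervalIntegrable 0 1)]
      have hv1 : v 1 = v 0 := by simpa using hvper 0
      have hη1 : η 1 = η 0 := by simpa using hηper 0
      simp [hgdef, hv1, hη1]
    have hsplit : ∀ t, f' 0 t =
        (F' (v t) (η t) * H' (v t) (deriv v t) - F' (v t) (deriv v t) * H' (v t) (η t)) + d t := by
      intro t
      simp only [hf'def, hγdef, hδdef, hddef, zero_smul, add_zero]
      ring
    rw [intervalIntegral.integral_congr (fun t _ => hsplit t), intervalIntegral.integral_add,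
      hdint, add_zero]
    · apply Continuous.intervalIntegrable
      exact (((hF'c.comp hv.continuous).clm_apply hη.continuous).mul
        ((hH'c.continuous.comp hv.continuous).clm_apply hv'c)).sub
        (((hF'c.comp hv.continuous).clm_apply hv'c).mul
        ((hH'c.continuous.comp hv.continuous).clm_apply hη.continuous))
    · exact hdc.intervalIntegrable 0 1
  rw [hint] at hkey
  exact hkey
end

section
/- Let f : ℝ → ℝ and β : ℝ → ℝ be continuously differentiable 1-periodic functions (f(t+1) = f(t) and β(τ+1) = β(τ) for all t, τ). Then ∫₀¹ | f'(t) · ∫₀¹ f'(t+τ)·β(τ) dτ | dt ≤ (sup_{t ∈ [0,1]} |f(t)|) · (∫₀¹ |f'(t)| dt) · (∫₀¹ |β'(τ)| dτ). -/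
/-!
Integrating by parts in `τ` over a full period moves the derivative from `f(t + ·)` onto `β`,
so the inner integral is at most `‖f‖_∞ · ‖β'‖_{L¹}` for every `t`; integrating against `|f'|`
then gives the bound.
-/

open Set intervalIntegral

lemma Function.Periodic.abs_le_iSup_Icc {f : ℝ → ℝ} {c : ℝ} (hf : Continuous f)
    (hper : Function.Periodic f c) (hc : 0 < c) (s : ℝ) :
    |f s| ≤ ⨆ t : Icc 0 c, |f t| := by
  obtain ⟨y, hy, hfy⟩ := hper.exists_mem_Ico₀ hc s
  have hbdd : BddAbove (range fun t : Icc 0 c => |f t|) := by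
    rw [← image_eq_range (fun t => |f t|)]
    exact isCompact_Icc.bddAbove_image hf.abs.continuousOn
  rw [hfy]
  exact le_ciSup hbdd ⟨y, Ico_subset_Icc_self hy⟩

/-- Integration by parts over a period: the boundary terms cancel by periodicity. -/
lemma integral_deriv_const_add_mul_eq_neg_of_periodic {f β : ℝ → ℝ} {c : ℝ}
    (hf : ContDiff ℝ 1 f) (hβ : ContDiff ℝ 1 β) (hfper : Function.Periodic f c)
    (hβper : Function.Periodic β c) (t : ℝ) :
    ∫ τ in 0..c, deriv f (t + τ) * β τ = -∫ τ in 0..c, f (t + τ) * deriv β τ := by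
  have hfd := hf.differentiable one_ne_zero
  have hshift : ∀ τ ∈ uIcc 0 c, HasDerivAt (fun τ => f (t + τ)) (deriv f (t + τ)) τ :=
    fun τ _ => (hfd (t + τ)).hasDerivAt.comp_const_add t τ
  have hβd : ∀ τ ∈ uIcc 0 c, HasDerivAt β (deriv β τ) τ :=
    fun τ _ => (hβ.differentiable one_ne_zero τ).hasDerivAt
  have hparts := integral_mul_deriv_eq_deriv_mul hshift hβd
    (((hf.continuous_deriv le_rfl).comp (continuous_const_add t)).intervalIntegrable _ _)
    ((hβ.continuous_deriv le_rfl).intervalIntegrable _ _)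
  rw [add_zero, hfper t, (by simpa using hβper 0 : β c = β 0)] at hparts
  linarith

lemma integral_abs_mul_le_of_abs_le {u v : ℝ → ℝ} {a b K : ℝ} (hab : a ≤ b)
    (hu : Continuous u) (hv : Continuous v) (hK : ∀ x, |v x| ≤ K) :
    ∫ x in a..b, |u x * v x| ≤ (∫ x in a..b, |u x|) * K := by
  rw [← integral_mul_const]
  refine integral_mono_on hab ((hu.mul hv).abs.intervalIntegrable _ _)
    ((hu.abs.mul continuous_const).intervalIntegrable _ _) fun x _ => ?_
  rw [abs_mul]
  exact mul_le_mul_of_nonneg_left (hK x) (abs_nonneg _)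

/-- the smearing estimate from the appendix on fuzzy Neumann
one-forms: for 1-periodic `C¹` functions `f` and `β`,
`∫₀¹ |f'(t)·∫₀¹ f'(t+τ)β(τ) dτ| dt ≤ ‖f‖_∞ · ‖f'‖_{L¹} · ‖β'‖_{L¹}`. -/
theorem statement13 (f β : ℝ → ℝ) (hf : ContDiff ℝ 1 f) (hβ : ContDiff ℝ 1 β)
    (hfper : ∀ t : ℝ, f (t + 1) = f t) (hβper : ∀ τ : ℝ, β (τ + 1) = β τ) :
    (∫ t in (0:ℝ)..1, |deriv f t * ∫ τ in (0:ℝ)..1, deriv f (t + τ) * β τ|) ≤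
      (⨆ t : Set.Icc (0:ℝ) 1, |f t|) * (∫ t in (0:ℝ)..1, |deriv f t|) *
        (∫ τ in (0:ℝ)..1, |deriv β τ|) := by
  set M := ⨆ t : Icc (0:ℝ) 1, |f t|
  set B := ∫ τ in (0:ℝ)..1, |deriv β τ|
  have hf' := hf.continuous_deriv le_rfl
  have hβ' := hβ.continuous_deriv le_rfl
  have hfM : ∀ s, |f s| ≤ M :=
    Function.Periodic.abs_le_iSup_Icc hf.continuous hfper one_pos
  have hinner : ∀ t, |∫ τ in (0:ℝ)..1, deriv f (t + τ) * β τ| ≤ M * B := fun t => by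
    rw [integral_deriv_const_add_mul_eq_neg_of_periodic hf hβ hfper hβper, abs_neg,
      mul_comm M]
    calc |∫ τ in (0:ℝ)..1, f (t + τ) * deriv β τ|
        ≤ ∫ τ in (0:ℝ)..1, |deriv β τ * f (t + τ)| := by
          simpa only [mul_comm] using abs_integral_le_integral_abs zero_le_one
      _ ≤ B * M := integral_abs_mul_le_of_abs_le zero_le_one hβ'
          (hf.continuous.comp (continuous_const_add t)) fun τ => hfM (t + τ)
  calc (∫ t in (0:ℝ)..1, |deriv f t * ∫ τ in (0:ℝ)..1, deriv f (t + τ) * β τ|)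
      ≤ (∫ t in (0:ℝ)..1, |deriv f t|) * (M * B) :=
        integral_abs_mul_le_of_abs_le zero_le_one hf' (by fun_prop) hinner
    _ = M * (∫ t in (0:ℝ)..1, |deriv f t|) * B := by ring
end
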